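/- Under the stated block hypotheses, and assuming additionally that F_{0j} = (2𝕚/d) sin(π/m) ω^{j/2 + (2−d)/(2m)} · 1_D for every j = 1,…,d−1, one has for all i, j ∈ {1,…,d−1} with i ≠ j: F_{ij} = −(2𝕚 sin(π/m)/d) ω^{(i+j)/2 + (2−d)/(2m)} · 1_D, where 𝕚 is the imaginary unit and 1_D the D×D identity. -/

import Mathlib

open Matrix Kronecker

/-- `omg d t` is ω^t = exp(2πi·t/d), where ω = exp(2πi/d). -/
noncomputable def omg (d : ℕ) (t : ℝ) : ℂ :=
  Complex.exp ((2 * Real.pi * t / d : ℝ) * Complex.I)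

/-- The coefficient a_k = ω^{(2k−d)/(4m)} / (2 cos(π/(2m))). -/
noncomputable def acoef (d m k : ℕ) : ℂ :=
  omg d ((2 * (k : ℝ) - d) / (4 * m)) / ((2 * Real.cos (Real.pi / (2 * m)) : ℝ) : ℂ)

/-- `abar d m A B k` is Ābar^{(k)} = a_k A^k + conj(a_k) B^k. -/
noncomputable def abar {n : Type*} [Fintype n] [DecidableEq n] (d m : ℕ)
    (A B : Matrix n n ℂ) (k : ℕ) : Matrix n n ℂ :=
  acoef d m k • A ^ k + (starRingEnd ℂ) (acoef d m k) • B ^ k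

/-- Z_d = diag(1, ω, …, ω^{d−1}). -/
noncomputable def Zmat (d : ℕ) : Matrix (Fin d) (Fin d) ℂ :=
  Matrix.diagonal fun i => omg d (i : ℝ)



lemma omg_mul (d : ℕ) (s t : ℝ) : omg d s * omg d t = omg d (s + t) := by
  rw [omg, omg, omg, ← Complex.exp_add]
  congr 1
  push_cast
  ring

lemma omg_zero (d : ℕ) : omg d 0 = 1 := by
  rw [omg]
  norm_num

lemma omg_ne_zero (d : ℕ) (t : ℝ) : omg d t ≠ 0 := Complex.exp_ne_zero _

lemma omg_pow (d n : ℕ) (t : ℝ) : omg d t ^ n = omg d (n * t) := by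
  rw [omg, omg, ← Complex.exp_nat_mul]
  congr 1
  push_cast
  ring

lemma omg_int_mul (d : ℕ) (hd : (d : ℝ) ≠ 0) (n : ℤ) : omg d ((n : ℝ) * d) = 1 := by
  rw [omg]
  have : ((2 * Real.pi * ((n:ℝ) * d) / d : ℝ) : ℂ) = (n : ℂ) * (2 * Real.pi) := by
    have : (d:ℂ) ≠ 0 := by exact_mod_cast hd
    push_cast
    field_simp
  rw [this, mul_assoc]
  exact Complex.exp_int_mul_two_pi_mul_I n

lemma omg_eq_one_iff (d : ℕ) (hd : d ≠ 0) (n : ℤ) : omg d (n : ℝ) = 1 ↔ (d : ℤ) ∣ n := by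
  have hd' : (d : ℝ) ≠ 0 := Nat.cast_ne_zero.mpr hd
  constructor
  · intro h
    rw [omg, Complex.exp_eq_one_iff] at h
    obtain ⟨k, hk⟩ := h
    have h2 : ((2 * Real.pi * n / d : ℝ) : ℂ) = ((k * (2 * Real.pi) : ℝ) : ℂ) := by
      apply mul_right_cancel₀ Complex.I_ne_zero
      rw [hk]
      push_cast
      ring
    have h3 : 2 * Real.pi * n / d = k * (2 * Real.pi) := Complex.ofReal_inj.mp h2
    have h4 : (n : ℝ) = k * d := by
      have hpi : (2 * Real.pi) ≠ 0 := by positivity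
      field_simp at h3
      have h3' : (2 * Real.pi) * (n:ℝ) = (2 * Real.pi) * ((k:ℝ) * d) := by rw [h3]; ring
      exact mul_left_cancel₀ hpi h3'
    have h5 : n = k * d := by exact_mod_cast h4
    exact ⟨k, by rw [h5]; ring⟩
  · rintro ⟨k, rfl⟩
    have h : ((d * k : ℤ) : ℝ) = (k : ℝ) * d := by push_cast; ring
    rw [h]
    exact omg_int_mul d hd' k

lemma omg_nat_inj (d : ℕ) (hd : d ≠ 0) (a b : ℕ) (ha : a < d) (hb : b < d)
    (h : omg d ((a : ℝ) - b) = 1) : a = b := by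
  have : omg d (((a : ℤ) - b : ℤ) : ℝ) = 1 := by
    push_cast
    exact_mod_cast h
  rw [omg_eq_one_iff d hd] at this
  have hz : ((a:ℤ) - b) = 0 := by
    refine Int.eq_zero_of_abs_lt_dvd this ?_
    rw [abs_lt]
    constructor <;> omega
  omega

-- geometric sums
lemma geom_kw (w : ℂ) (n : ℕ) :
    (1 - w) * ∑ k ∈ Finset.range n, (k : ℂ) * w ^ k =
      (∑ k ∈ Finset.range n, w ^ k) - 1 - ((n : ℂ) - 1) * w ^ n := by
  induction n with
  | zero => simp
  | succ n ih =>
    rw [Finset.sum_range_succ, Finset.sum_range_succ, mul_add, ih]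
    push_cast
    ring

lemma geom_root_sum_zero (w : ℂ) (hw : w ≠ 1) (d : ℕ) (hwd : w ^ d = 1) :
    ∑ k ∈ Finset.range d, w ^ k = 0 := by
  rw [geom_sum_eq hw, hwd, sub_self, zero_div]

lemma geom_kw_root (w : ℂ) (hw : w ≠ 1) (d : ℕ) (hwd : w ^ d = 1) :
    (1 - w) * ∑ k ∈ Finset.range d, (k : ℂ) * w ^ k = -(d : ℂ) := by
  rw [geom_kw, geom_root_sum_zero w hw d hwd, hwd]
  ring

section scalars
variable (d m : ℕ) (hd : 2 ≤ d) (hm : 2 ≤ m)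

lemma c2_ne (hm : 2 ≤ m) : ((2 * Real.cos (Real.pi / (2 * m)) : ℝ) : ℂ) ≠ 0 := by
  have h1 : 0 < Real.cos (Real.pi / (2 * m)) := by
    apply Real.cos_pos_of_mem_Ioo
    have hm' : (2:ℝ) ≤ m := by exact_mod_cast hm
    constructor
    · have h0 : 0 < Real.pi / (2 * m) := by positivity
      nlinarith [Real.pi_pos]
    · calc Real.pi / (2 * m) < Real.pi / 2 := by
            apply div_lt_div_of_pos_left Real.pi_pos (by norm_num) (by linarith)
        _ ≤ Real.pi / 2 := le_refl _
  intro h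
  rw [Complex.ofReal_eq_zero] at h
  linarith

lemma omg_conj (d : ℕ) (t : ℝ) : (starRingEnd ℂ) (omg d t) = omg d (-t) := by
  rw [omg, omg, ← Complex.exp_conj]
  congr 1
  rw [_root_.map_mul, Complex.conj_I, Complex.conj_ofReal]
  push_cast
  ring

lemma conj_acoef (k : ℕ) : (starRingEnd ℂ) (acoef d m k) =
    omg d (-((2 * (k : ℝ) - d) / (4 * m))) / ((2 * Real.cos (Real.pi / (2 * m)) : ℝ) : ℂ) := by
  rw [acoef, map_div₀, omg_conj, Complex.conj_ofReal]

lemma hcos (hd : 2 ≤ d) (hm : 2 ≤ m) : ((2 * Real.cos (Real.pi / (2 * m)) : ℝ) : ℂ) =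
    omg d ((d : ℝ) / (4 * m)) + omg d (-((d : ℝ) / (4 * m))) := by
  have hd0 : (d : ℝ) ≠ 0 := by positivity
  have hm0 : (m : ℝ) ≠ 0 := by positivity
  have h1 : (2 * Real.pi * ((d : ℝ) / (4 * m)) / d : ℝ) = Real.pi / (2 * m) := by
    field_simp; ring
  have h2 : (2 * Real.pi * (-((d : ℝ) / (4 * m))) / d : ℝ) = -(Real.pi / (2 * m)) := by
    field_simp; ring
  rw [omg, omg, h1, h2]
  push_cast
  rw [Complex.exp_mul_I, Complex.exp_mul_I]
  simp [Complex.cos_neg, Complex.sin_neg]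
  ring

lemma hsin (hd : 2 ≤ d) (hm : 2 ≤ m) :
    omg d (-((d : ℝ) / (2 * m))) - omg d ((d : ℝ) / (2 * m)) =
      -2 * Complex.I * (Real.sin (Real.pi / m) : ℂ) := by
  have hd0 : (d : ℝ) ≠ 0 := by positivity
  have hm0 : (m : ℝ) ≠ 0 := by positivity
  have h1 : (2 * Real.pi * ((d : ℝ) / (2 * m)) / d : ℝ) = Real.pi / m := by
    field_simp
  have h2 : (2 * Real.pi * (-((d : ℝ) / (2 * m))) / d : ℝ) = -(Real.pi / m) := by
    field_simp
  rw [omg, omg, h1, h2]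
  push_cast
  rw [Complex.exp_mul_I, Complex.exp_mul_I]
  simp [Complex.cos_neg, Complex.sin_neg]
  ring
end scalars

lemma omg_fuse (d : ℕ) (s t : ℝ) (x : ℂ) : omg d s * (omg d t * x) = omg d (s + t) * x := by
  rw [← mul_assoc, omg_mul]

set_option maxHeartbeats 1000000 in
lemma hA1 (d m : ℕ) (hd : 2 ≤ d) (hm : 2 ≤ m) (k : ℕ) :
    ((2 * Real.cos (Real.pi / (2 * m)) : ℝ) : ℂ)^2 *
    (acoef d m (k+1) - acoef d m 1 * acoef d m k) * omg d ((2*(k:ℝ)+2)/(4*m)) =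
    omg d (((k:ℝ)+1)/m) := by
  have hm0 : 0 < m := by omega
  have hm0' : (m : ℝ) ≠ 0 := by positivity
  obtain ⟨c, hcEq, hc0⟩ : ∃ c : ℂ, ((2 * Real.cos (Real.pi / (2 * m)) : ℝ) : ℂ) = c ∧ c ≠ 0 :=
    ⟨_, rfl, c2_ne m hm⟩
  have hco := hcos d m hd hm
  rw [hcEq] at hco
  rw [acoef, acoef, acoef, hcEq]
  push_cast
  field_simp [hc0]
  rw [hco]
  ring_nf
  simp only [omg_pow, omg_mul, omg_fuse, mul_assoc]
  ring_nf

set_option maxHeartbeats 1000000 in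
lemma hA2 (d m : ℕ) (hd : 2 ≤ d) (hm : 2 ≤ m) (k : ℕ) :
    ((2 * Real.cos (Real.pi / (2 * m)) : ℝ) : ℂ)^2 *
    ((starRingEnd ℂ) (acoef d m 1) * (starRingEnd ℂ) (acoef d m k) -
      (starRingEnd ℂ) (acoef d m (k+1))) * omg d ((2*(k:ℝ)+2)/(4*m)) = -1 := by
  have hm0' : (m : ℝ) ≠ 0 := by positivity
  obtain ⟨c, hcEq, hc0⟩ : ∃ c : ℂ, ((2 * Real.cos (Real.pi / (2 * m)) : ℝ) : ℂ) = c ∧ c ≠ 0 :=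
    ⟨_, rfl, c2_ne m hm⟩
  have hco := hcos d m hd hm
  rw [hcEq] at hco
  rw [conj_acoef, conj_acoef, conj_acoef, hcEq]
  push_cast
  field_simp [hc0]
  rw [hco]
  ring_nf
  simp only [omg_pow, omg_mul, omg_fuse, mul_assoc]
  ring_nf
  rw [omg_zero]

set_option maxHeartbeats 1000000 in
lemma hA3 (d m : ℕ) (hd : 2 ≤ d) (hm : 2 ≤ m) (k : ℕ) :
    ((2 * Real.cos (Real.pi / (2 * m)) : ℝ) : ℂ)^2 *
    (acoef d m 1 * (starRingEnd ℂ) (acoef d m k)) * omg d ((2*(k:ℝ)+2)/(4*m)) =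
    omg d (1/m) := by
  have hm0' : (m : ℝ) ≠ 0 := by positivity
  obtain ⟨c, hcEq, hc0⟩ : ∃ c : ℂ, ((2 * Real.cos (Real.pi / (2 * m)) : ℝ) : ℂ) = c ∧ c ≠ 0 :=
    ⟨_, rfl, c2_ne m hm⟩
  rw [conj_acoef, acoef, hcEq]
  push_cast
  field_simp [hc0]
  ring_nf
  simp only [omg_pow, omg_mul, omg_fuse, mul_assoc]
  congr 1
  ring

set_option maxHeartbeats 1000000 in
lemma hA4 (d m : ℕ) (hd : 2 ≤ d) (hm : 2 ≤ m) (k : ℕ) :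
    ((2 * Real.cos (Real.pi / (2 * m)) : ℝ) : ℂ)^2 *
    ((starRingEnd ℂ) (acoef d m 1) * acoef d m k) * omg d ((2*(k:ℝ)+2)/(4*m)) =
    omg d ((k:ℝ)/m) := by
  have hm0' : (m : ℝ) ≠ 0 := by positivity
  obtain ⟨c, hcEq, hc0⟩ : ∃ c : ℂ, ((2 * Real.cos (Real.pi / (2 * m)) : ℝ) : ℂ) = c ∧ c ≠ 0 :=
    ⟨_, rfl, c2_ne m hm⟩
  rw [conj_acoef, acoef, hcEq]
  push_cast
  field_simp [hc0]
  ring_nf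
  simp only [omg_pow, omg_mul, omg_fuse, mul_assoc]
  congr 1
  ring

lemma hAd (d m : ℕ) (hd : 2 ≤ d) (hm : 2 ≤ m) :
    acoef d m d + (starRingEnd ℂ) (acoef d m d) = 1 := by
  have hm0' : (m : ℝ) ≠ 0 := by positivity
  obtain ⟨c, hcEq, hc0⟩ : ∃ c : ℂ, ((2 * Real.cos (Real.pi / (2 * m)) : ℝ) : ℂ) = c ∧ c ≠ 0 :=
    ⟨_, rfl, c2_ne m hm⟩
  have hco := hcos d m hd hm
  rw [hcEq] at hco
  rw [conj_acoef, acoef, hcEq]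
  field_simp [hc0]
  rw [hco]
  ring_nf


lemma key1 (d m : ℕ) (hd : 2 ≤ d) (hm : 2 ≤ m) (ia ja : ℕ) :
    (omg d ((d:ℝ)/(2*m)) - omg d (-((d:ℝ)/(2*m)))) *
      (omg d ((ia:ℝ)/2 + (2-(d:ℝ))/(2*m)) * omg d (((ia:ℝ)+ja)/2 + (2-(d:ℝ))/(2*m))
        * omg d ((ja:ℝ)-ia) * omg d (-(ja:ℝ)))
    = omg d ((ja:ℝ)/2 + (2-(d:ℝ))/(2*m)) * (omg d (1/m) - omg d ((1-(d:ℝ))/m)) := by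
  rw [sub_mul, mul_sub]
  simp only [omg_mul]
  congr 1
  · congr 1
    ring
  · congr 1
    ring

/-- Assuming F_{0j} = (2i/d) sin(π/m) ω^{j/2+(2−d)/(2m)} · 1_D for j ≠ ⟨0, by omega⟩, for
all i, j ∈ {1,…,d−1} with i ≠ j:
F_{ij} = −(2i sin(π/m)/d) ω^{(i+j)/2+(2−d)/(2m)} · 1_D. -/
theorem stmt12 (d m D : ℕ) (hd : 2 ≤ d) (hm : 2 ≤ m) (hD : 1 ≤ D)
    (B : Matrix (Fin d × Fin D) (Fin d × Fin D) ℂ)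
    (hB : B ∈ Matrix.unitaryGroup (Fin d × Fin D) ℂ) (hBd : B ^ d = 1)
    (F : Fin d → Fin d → Matrix (Fin D) (Fin D) ℂ)
    (hF : ∀ (i j : Fin d) (p q : Fin D), B (i, p) (j, q) = F i j p q)
    (hrel1 : ∀ k, 1 ≤ k → k ≤ d - 1 →
      abar d m (Zmat d ⊗ₖ (1 : Matrix (Fin D) (Fin D) ℂ)) B k *
        abar d m (Zmat d ⊗ₖ (1 : Matrix (Fin D) (Fin D) ℂ)) B (d - k) = 1)
    (hrel2 : ∀ k, 1 ≤ k → k ≤ d - 1 →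
      abar d m (Zmat d ⊗ₖ (1 : Matrix (Fin D) (Fin D) ℂ)) B k =
        (abar d m (Zmat d ⊗ₖ (1 : Matrix (Fin D) (Fin D) ℂ)) B 1) ^ k)
    (hF0 : ∀ j : Fin d, j ≠ ⟨0, by omega⟩ →
      F ⟨0, by omega⟩ j = ((2 * Complex.I / d) * (Real.sin (Real.pi / m) : ℂ) *
        omg d ((j : ℝ) / 2 + (2 - (d : ℝ)) / (2 * m))) • (1 : Matrix (Fin D) (Fin D) ℂ)) :
    ∀ i j : Fin d, i ≠ ⟨0, by omega⟩ → j ≠ ⟨0, by omega⟩ → i ≠ j →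
      F i j = (-(2 * Complex.I * (Real.sin (Real.pi / m) : ℂ) / d) *
        omg d (((i : ℝ) + j) / 2 + (2 - (d : ℝ)) / (2 * m))) •
        (1 : Matrix (Fin D) (Fin D) ℂ) := by
  intro i j hi hj hij
  have hdn : d ≠ 0 := by omega
  have hd0 : (d : ℝ) ≠ 0 := Nat.cast_ne_zero.mpr hdn
  have hm0 : (m : ℝ) ≠ 0 := by positivity
  set i0 : Fin d := ⟨0, by omega⟩ with hi0def
  set A := Zmat d ⊗ₖ (1 : Matrix (Fin D) (Fin D) ℂ) with hAset
  have hAdiag : A = Matrix.diagonal (fun z : Fin d × Fin D => omg d (z.1.1 : ℝ)) := by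
    rw [hAset, Zmat]
    ext ⟨i1, p⟩ ⟨j1, q⟩
    simp [Matrix.kroneckerMap_apply, Matrix.diagonal_apply, Matrix.one_apply, Prod.ext_iff]
    by_cases h1 : i1 = j1 <;> by_cases h2 : p = q <;> simp [h1, h2]
  have hApow : ∀ k : ℕ, A ^ k =
      Matrix.diagonal (fun z : Fin d × Fin D => omg d ((z.1.1 : ℝ) * k)) := by
    intro k
    rw [hAdiag, Matrix.diagonal_pow]
    refine congrArg Matrix.diagonal (funext fun z => ?_)
    show omg d (z.1.1 : ℝ) ^ k = omg d ((z.1.1 : ℝ) * k)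
    rw [omg_pow]
    congr 1
    ring
  have hAdone : A ^ d = 1 := by
    rw [hApow d]
    have : ∀ z : Fin d × Fin D, omg d ((z.1.1 : ℝ) * d) = 1 := by
      intro z
      have : ((z.1.1 : ℝ) * d) = (((z.1.1 : ℕ) : ℤ) : ℝ) * d := by push_cast; ring
      rw [this]
      exact omg_int_mul d hd0 _
    rw [show (fun z : Fin d × Fin D => omg d ((z.1.1 : ℝ) * d)) = fun _ => (1 : ℂ) from
      funext this]
    exact Matrix.diagonal_one
  -- step 1 : unified product relation
  have L1 : ∀ k, 1 ≤ k → k ≤ d - 1 → abar d m A B 1 * abar d m A B k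
      = acoef d m (k+1) • A ^ (k+1) + (starRingEnd ℂ) (acoef d m (k+1)) • B ^ (k+1) := by
    intro k h1 h2
    by_cases hk : k = d - 1
    · subst hk
      rw [show d - 1 + 1 = d from by omega]
      rw [hrel1 1 (by omega) (by omega), hAdone, hBd, ← add_smul, hAd d m hd hm, one_smul]
    · rw [hrel2 k h1 h2, ← pow_succ', ← hrel2 (k+1) (by omega) (by omega), abar]
  -- step 2 : entrywise recursion
  have hRec : ∀ k, 1 ≤ k → k ≤ d - 1 → ∀ x y : Fin d × Fin D,
      (B ^ (k+1)) x y = omg d (1/m) * omg d (x.1.1 : ℝ) * (B ^ k) x y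
        + omg d ((k:ℝ)/m) * omg d ((y.1.1 : ℝ) * k) * B x y
        - omg d (((k:ℝ)+1)/m) * omg d ((x.1.1 : ℝ) * ((k:ℝ)+1)) *
            (if x = y then 1 else 0) := by
    intro k h1 h2 x y
    have hL := L1 k h1 h2
    have expand : abar d m A B 1 * abar d m A B k
        = (acoef d m 1 * acoef d m k) • (A * A ^ k)
          + (acoef d m 1 * (starRingEnd ℂ) (acoef d m k)) • (A * B ^ k)
          + ((starRingEnd ℂ) (acoef d m 1) * acoef d m k) • (B * A ^ k)
          + ((starRingEnd ℂ) (acoef d m 1) * (starRingEnd ℂ) (acoef d m k)) • (B * B ^ k) := by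
      rw [abar, abar]
      simp only [pow_one]
      rw [add_mul, mul_add, mul_add]
      simp only [smul_mul_assoc, mul_smul_comm, smul_smul]
      module
    rw [expand] at hL
    rw [show A * A ^ k = A ^ (k+1) from (pow_succ' A k).symm,
        show B * B ^ k = B ^ (k+1) from (pow_succ' B k).symm] at hL
    have hE := congrFun (congrFun hL x) y
    simp only [Matrix.add_apply, Matrix.smul_apply, smul_eq_mul] at hE
    have e1 : (A * B ^ k) x y = omg d (x.1.1 : ℝ) * (B ^ k) x y := by
      rw [hAdiag, Matrix.diagonal_mul]
    have e2 : (B * A ^ k) x y = B x y * omg d ((y.1.1 : ℝ) * k) := by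
      rw [hApow k, Matrix.mul_diagonal]
    have e3 : (A ^ (k+1)) x y
        = omg d ((x.1.1 : ℝ) * ((k:ℝ)+1)) * (if x = y then 1 else 0) := by
      rw [hApow (k+1), Matrix.diagonal_apply]
      push_cast
      split <;> simp
    rw [e1, e2, e3] at hE
    linear_combination (-(((2 * Real.cos (Real.pi / (2 * (m:ℕ))) : ℝ) : ℂ)^2 *
        omg d ((2*(k:ℝ)+2)/(4*m)))) * hE
      - (omg d ((x.1.1:ℝ)*((k:ℝ)+1)) * (if x = y then (1:ℂ) else 0)) * hA1 d m hd hm k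
      + (omg d (x.1.1:ℝ) * (B^k) x y) * hA3 d m hd hm k
      + (omg d ((y.1.1:ℝ)*k) * B x y) * hA4 d m hd hm k
      + ((B^(k+1)) x y) * hA2 d m hd hm k
  -- Φ and its properties
  set Φ : ℕ → ℕ → ℕ → ℂ := fun k a b =>
    ∑ r ∈ Finset.range k, omg d ((a : ℝ) * r + (b : ℝ) * ((k : ℝ) - 1 - r)) with hΦdef
  have hPhiRec : ∀ (k a b : ℕ), Φ (k+1) a b = omg d (a : ℝ) * Φ k a b + omg d ((b : ℝ) * k) := by
    intro k a b
    simp only [hΦdef]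
    rw [Finset.sum_range_succ']
    congr 1
    · rw [Finset.mul_sum]
      refine Finset.sum_congr rfl fun r hr => ?_
      rw [omg_mul]
      congr 1
      push_cast
      ring
    · congr 1
      push_cast
      ring
  have hPhiDiag : ∀ (k a : ℕ), Φ k a a = (k : ℂ) * omg d ((a : ℝ) * ((k : ℝ) - 1)) := by
    intro k a
    simp only [hΦdef]
    trans (∑ _r ∈ Finset.range k, omg d ((a:ℝ)*((k:ℝ)-1)))
    · exact Finset.sum_congr rfl fun r hr => by congr 1; ring
    · rw [Finset.sum_const, Finset.card_range, nsmul_eq_mul]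
  have homgne : ∀ a b : ℕ, a < d → b < d → a ≠ b → omg d (a : ℝ) ≠ omg d (b : ℝ) := by
    intro a b ha hb hab heq
    apply hab
    apply omg_nat_inj d hdn a b ha hb
    have e := omg_mul d (a:ℝ) (-(b:ℝ))
    rw [show (a:ℝ) + -(b:ℝ) = (a:ℝ) - b from by ring] at e
    rw [← e, heq, omg_mul]
    rw [show (b:ℝ) + -(b:ℝ) = 0 from by ring, omg_zero]
  have hPhiD0 : ∀ a b : ℕ, a < d → b < d → a ≠ b → Φ d a b = 0 := by
    intro a b ha hb hab
    have h2 : Φ d a b = ∑ r ∈ Finset.range d, omg d (a:ℝ) ^ r * omg d (b:ℝ) ^ (d - 1 - r) := by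
      simp only [hΦdef]
      refine Finset.sum_congr rfl fun r hr => ?_
      rw [omg_pow, omg_pow, omg_mul]
      congr 1
      have hr' : r < d := Finset.mem_range.mp hr
      rw [Nat.cast_sub (by omega : r ≤ d - 1), Nat.cast_sub (by omega : 1 ≤ d)]
      push_cast
      ring
    have key : Φ d a b * (omg d (a:ℝ) - omg d (b:ℝ)) = 0 := by
      rw [h2, geom_sum₂_mul, omg_pow, omg_pow]
      rw [show (d:ℝ) * a = (((a:ℕ):ℤ):ℝ) * d from by push_cast; ring, omg_int_mul d hd0,
          show (d:ℝ) * b = (((b:ℕ):ℤ):ℝ) * d from by push_cast; ring, omg_int_mul d hd0,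
          sub_self]
    rcases mul_eq_zero.mp key with h | h
    · exact h
    · exact absurd (sub_eq_zero.mp h) (homgne a b ha hb hab)
  -- closed form
  have hC : ∀ k, k ≤ d → ∀ x y : Fin d × Fin D,
      (B ^ k) x y = omg d (((k:ℝ) - 1)/m) * (Φ k x.1.1 y.1.1 * B x y
        - ((k:ℂ) - 1) * omg d (1/m) * omg d ((x.1.1 : ℝ) * k) * (if x = y then 1 else 0)) := by
    intro k
    induction k with
    | zero =>
      intro _ x y
      simp only [pow_zero, Matrix.one_apply, Nat.cast_zero]
      have hΦ0 : Φ 0 x.1.1 y.1.1 = 0 := by simp [hΦdef]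
      rw [hΦ0]
      have e1 : omg d ((x.1.1:ℝ) * (0:ℕ)) = 1 := by
        rw [show ((x.1.1:ℝ) * ((0:ℕ):ℝ)) = 0 from by push_cast; ring, omg_zero]
      push_cast at e1 ⊢
      rw [e1]
      have e2 : omg d (((0:ℝ)-1)/m) * omg d (1/m) = 1 := by
        rw [omg_mul, show ((0:ℝ)-1)/m + 1/m = 0 from by ring, omg_zero]
      linear_combination (-(if x = y then (1:ℂ) else 0)) * e2
    | succ k ih =>
      intro hk1 x y
      by_cases hk0 : k = 0
      · subst hk0
        simp only [zero_add, pow_one, Nat.cast_one]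
        have hΦ1 : Φ 1 x.1.1 y.1.1 = 1 := by
          simp only [hΦdef, Finset.sum_range_one]
          rw [show ((x.1.1:ℝ) * ((0:ℕ):ℝ) + (y.1.1:ℝ)*(((1:ℕ):ℝ) - 1 - ((0:ℕ):ℝ))) = 0 from by
            push_cast; ring]
          exact omg_zero d
        rw [hΦ1]
        rw [show ((1:ℝ)-1)/(m:ℝ) = 0 from by ring, omg_zero]
        ring
      · have hk' : 1 ≤ k := by omega
        have hkd : k ≤ d - 1 := by omega
        rw [hRec k hk' hkd x y, ih (by omega) x y, hPhiRec k x.1.1 y.1.1]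
        push_cast
        rw [show ((k:ℝ) + 1 - 1)/(m:ℝ) = (k:ℝ)/m from by ring]
        have f1 : omg d (1/m) * omg d (((k:ℝ)-1)/m) = omg d ((k:ℝ)/m) := by
          rw [omg_mul]
          congr 1
          field_simp
          ring
        have f2 : omg d ((k:ℝ)/m) * omg d (1/m) = omg d (((k:ℝ)+1)/m) := by
          rw [omg_mul]
          congr 1
          field_simp
        have f3 : omg d ((x.1.1:ℝ)) * omg d ((x.1.1:ℝ)*k) = omg d ((x.1.1:ℝ)*((k:ℝ)+1)) := by
          rw [omg_mul]
          congr 1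
          ring
        linear_combination
          (omg d (x.1.1:ℝ) * Φ k x.1.1 y.1.1 * B x y
            - ((k:ℂ)-1) * omg d (1/m) * omg d (x.1.1:ℝ) * omg d ((x.1.1:ℝ)*k) *
              (if x = y then (1:ℂ) else 0)) * f1
          - ((k:ℂ)-1) * omg d (1/m) * omg d ((k:ℝ)/m) * (if x = y then (1:ℂ) else 0) * f3
          + omg d ((x.1.1:ℝ)*((k:ℝ)+1)) * (if x = y then (1:ℂ) else 0) * f2
  -- diagonal entries
  set xx : ℂ := (omg d ((1 - (d:ℝ))/m) + ((d:ℂ) - 1) * omg d (1/m)) / d with hxxdef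
  have hxd : (d:ℂ) * xx = omg d ((1-(d:ℝ))/m) + ((d:ℂ)-1) * omg d (1/m) := by
    rw [hxxdef]
    have : (d:ℂ) ≠ 0 := Nat.cast_ne_zero.mpr hdn
    field_simp
  have hdiagB : ∀ (a : Fin d) (p q : Fin D), B (a, p) (a, q)
      = omg d (a.1 : ℝ) * xx * (if p = q then 1 else 0) := by
    intro a p q
    have hE := hC d (le_refl d) (a, p) (a, q)
    rw [hBd, hPhiDiag d a.1, Matrix.one_apply] at hE
    rw [show (if ((a,p) : Fin d × Fin D) = (a,q) then (1:ℂ) else 0)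
        = (if p = q then (1:ℂ) else 0) from by simp [Prod.ext_iff]] at hE
    have e1 : omg d ((a.1:ℝ) * d) = 1 := by
      rw [show ((a.1:ℝ) * d) = (((a.1:ℕ):ℤ):ℝ) * d from by push_cast; ring]
      exact omg_int_mul d hd0 _
    rw [e1] at hE
    have f1 : omg d (((d:ℝ)-1)/m) * omg d ((1-(d:ℝ))/m) = 1 := by
      rw [omg_mul, show ((d:ℝ)-1)/m + (1-(d:ℝ))/m = 0 from by ring, omg_zero]
    have f2 : omg d ((a.1:ℝ)*((d:ℝ)-1)) * omg d (a.1:ℝ) = 1 := by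
      rw [omg_mul, show (a.1:ℝ)*((d:ℝ)-1) + (a.1:ℝ) = (((a.1:ℕ):ℤ):ℝ)*d from by push_cast; ring]
      exact omg_int_mul d hd0 _
    have hne2 : omg d (((d:ℝ)-1)/m) * (d:ℂ) * omg d ((a.1:ℝ)*((d:ℝ)-1)) ≠ 0 := by
      have : (d:ℂ) ≠ 0 := Nat.cast_ne_zero.mpr hdn
      exact mul_ne_zero (mul_ne_zero (omg_ne_zero _ _) this) (omg_ne_zero _ _)
    apply mul_left_cancel₀ hne2
    linear_combination (-1 : ℂ) * hE
      - (omg d (((d:ℝ)-1)/m) * (d:ℂ) * xx * (if p = q then (1:ℂ) else 0)) * f2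
      - (omg d (((d:ℝ)-1)/m) * (if p = q then (1:ℂ) else 0)) * hxd
      - (if p = q then (1:ℂ) else 0) * f1
  set s : ℂ := ((Real.sin (Real.pi / m) : ℝ) : ℂ) with hsdef
  set cf : Fin d → ℂ := fun l => if l = i0 then xx
      else (2 * Complex.I / d) * s * omg d ((l.1 : ℝ)/2 + (2 - (d:ℝ))/(2*m)) with hcfdef
  have hrow0 : ∀ (l : Fin d) (p r : Fin D), B (i0, p) (l, r) = cf l * (if p = r then 1 else 0) := by
    intro l p r
    by_cases hl : l = i0
    · subst hl
      rw [hdiagB i0 p r]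
      have h1 : cf i0 = xx := by rw [hcfdef]; simp
      have h2 : omg d ((i0.1 : ℕ) : ℝ) = 1 := by
        have e : (i0.1 : ℕ) = 0 := rfl
        rw [e, Nat.cast_zero, omg_zero]
      rw [h1, h2, one_mul]
    · rw [hF i0 l p r, hF0 l hl, Matrix.smul_apply, Matrix.one_apply, smul_eq_mul]
      rw [hcfdef]
      simp only [if_neg hl]
  -- fix entries
  ext p q
  rw [← hF i j p q, Matrix.smul_apply, Matrix.one_apply, smul_eq_mul]
  set δ : ℂ := if p = q then (1 : ℂ) else 0 with hδdef
  set z : Fin d → ℂ := fun l => B (l, p) (j, q) with hzdef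
  -- the linear system
  have hPk : ∀ k, k < d →
      omg d (1/m) * Φ (k+1) 0 j.1 * cf j * δ
        + ((k:ℂ) - 1) * omg d (1/m) * omg d ((j.1 : ℝ) * k) * cf j * δ
        - ∑ l : Fin d, cf l * Φ k l.1 j.1 * z l = 0 := by
    intro k hk
    have hkd : k ≤ d := by omega
    have hBB : (B ^ (k+1)) (i0, p) (j, q) = ∑ l : Fin d, cf l * (B ^ k) (l, p) (j, q) := by
      rw [pow_succ', Matrix.mul_apply, Fintype.sum_prod_type]
      refine Finset.sum_congr rfl fun l _ => ?_
      trans (∑ r : Fin D, if p = r then cf l * (B ^ k) (l, r) (j, q) else 0)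
      · refine Finset.sum_congr rfl fun r _ => ?_
        rw [hrow0 l p r]
        by_cases h : p = r <;> simp [h]
      · simp
    have hLHS : (B ^ (k+1)) (i0, p) (j, q)
        = omg d ((k:ℝ)/m) * (Φ (k+1) 0 j.1 * (cf j * δ)) := by
      rw [hC (k+1) (by omega) (i0, p) (j, q)]
      rw [show ((((k+1:ℕ)):ℝ)-1)/(m:ℝ) = (k:ℝ)/m from by push_cast; ring]
      have hite : (if ((i0,p) : Fin d × Fin D) = (j,q) then (1:ℂ) else 0) = 0 := by
        have : i0 ≠ j := Ne.symm hj
        simp [Prod.ext_iff, this]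
      rw [hite]
      have hB0j : B (i0, p) (j, q) = cf j * δ := by rw [hrow0 j p q, hδdef]
      rw [hB0j]
      have : ((i0, p) : Fin d × Fin D).1.1 = 0 := rfl
      rw [this]
      ring
    have hRl : ∀ l : Fin d, (B ^ k) ((l,p) : Fin d × Fin D) (j,q)
        = omg d (((k:ℝ)-1)/m) * (Φ k l.1 j.1 * z l
          - ((k:ℂ)-1) * omg d (1/m) * omg d ((l.1:ℝ)*k) * ((if l = j then (1:ℂ) else 0) * δ)) := by
      intro l
      rw [hC k hkd (l,p) (j,q)]
      have hsp : (if ((l,p) : Fin d × Fin D) = (j,q) then (1:ℂ) else 0)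
          = (if l = j then (1:ℂ) else 0) * δ := by
        rw [hδdef]
        by_cases h1 : l = j <;> by_cases h2 : p = q <;> simp [h1, h2, Prod.ext_iff]
      rw [hsp]
    have hsum : ∑ l : Fin d, cf l * (B ^ k) ((l,p) : Fin d × Fin D) (j,q)
        = omg d (((k:ℝ)-1)/m) * ((∑ l : Fin d, cf l * Φ k l.1 j.1 * z l)
          - cf j * (((k:ℂ)-1) * omg d (1/m) * omg d ((j.1:ℝ)*k) * δ)) := by
      trans (∑ l : Fin d, (omg d (((k:ℝ)-1)/m) * (cf l * Φ k l.1 j.1 * z l)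
          - omg d (((k:ℝ)-1)/m) * (((k:ℂ)-1) * omg d (1/m) * δ)
            * (if l = j then cf l * omg d ((l.1:ℝ)*k) else 0)))
      · refine Finset.sum_congr rfl fun l _ => ?_
        rw [hRl l]
        by_cases h : l = j <;> simp [h] <;> ring
      · rw [Finset.sum_sub_distrib, ← Finset.mul_sum, ← Finset.mul_sum]
        rw [Finset.sum_ite_eq' Finset.univ j (fun l => cf l * omg d ((l.1:ℝ)*k))]
        simp only [Finset.mem_univ, if_true]
        ring
    rw [hLHS, hsum] at hBB
    have f5 : omg d (((k:ℝ)-1)/m) * omg d (1/m) = omg d ((k:ℝ)/m) := by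
      rw [omg_mul]
      congr 1
      field_simp
      ring
    apply mul_left_cancel₀ (omg_ne_zero d (((k:ℝ)-1)/m))
    rw [mul_zero]
    linear_combination (Φ (k+1) 0 j.1 * cf j * δ) * f5 + hBB
  -- roots of unity
  set w : ℂ := omg d ((j.1 : ℝ) - i.1) with hwdef
  have hw1 : w ≠ 1 := by
    intro h
    exact hij (Fin.ext (omg_nat_inj d hdn j.1 i.1 j.isLt i.isLt h).symm)
  have hwd : w ^ d = 1 := by
    rw [hwdef, omg_pow]
    rw [show (d:ℝ) * ((j.1:ℝ) - i.1) = ((((j.1:ℕ):ℤ) - ((i.1:ℕ):ℤ) : ℤ):ℝ) * d from by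
      push_cast; ring]
    exact omg_int_mul d hd0 _
  have hgeo : ∑ k ∈ Finset.range d, w ^ k = 0 := geom_root_sum_zero w hw1 d hwd
  have hT : (1 - w) * ∑ k ∈ Finset.range d, (k : ℂ) * w ^ k = -(d : ℂ) := by
    rw [geom_kw, hgeo, hwd]; ring
  set γ : Fin d → ℂ := fun l => ∑ k ∈ Finset.range d, omg d (-((i.1 : ℝ) * k)) * Φ k l.1 j.1
    with hγdef
  have hstar : ∀ a : ℕ, a < d →
      omg d (a : ℝ) * (∑ k ∈ Finset.range d, omg d (-((i.1 : ℝ) * k)) * Φ k a j.1)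
        + ∑ k ∈ Finset.range d, w ^ k
      = omg d (i.1 : ℝ) * (∑ k ∈ Finset.range d, omg d (-((i.1 : ℝ) * k)) * Φ k a j.1)
        + omg d (i.1 : ℝ) * Φ d a j.1 := by
    intro a ha
    have hg0 : Φ 0 a j.1 = 0 := by simp [hΦdef]
    have hgd : omg d (-((i.1:ℝ)*d)) = 1 := by
      rw [show -((i.1:ℝ)*d) = (((-(i.1:ℕ) : ℤ)):ℝ)*d from by push_cast; ring]
      exact omg_int_mul d hd0 _
    have e1 : (∑ k ∈ Finset.range d, omg d (-((i.1:ℝ)*k)) * Φ (k+1) a j.1)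
        = omg d (a:ℝ) * (∑ k ∈ Finset.range d, omg d (-((i.1:ℝ)*k)) * Φ k a j.1)
          + ∑ k ∈ Finset.range d, w ^ k := by
      rw [Finset.mul_sum, ← Finset.sum_add_distrib]
      refine Finset.sum_congr rfl fun k _ => ?_
      rw [hPhiRec k a j.1, mul_add]
      congr 1
      · ring
      · rw [omg_mul, hwdef, omg_pow]
        congr 1
        ring
    have e2 : (∑ k ∈ Finset.range d, omg d (-((i.1:ℝ)*k)) * Φ (k+1) a j.1)
        = omg d (i.1:ℝ) * ((∑ k ∈ Finset.range d, omg d (-((i.1:ℝ)*k)) * Φ k a j.1)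
            + Φ d a j.1) := by
      trans (∑ k ∈ Finset.range d,
          omg d (i.1:ℝ) * (omg d (-((i.1:ℝ)*((k+1:ℕ):ℝ))) * Φ (k+1) a j.1))
      · refine Finset.sum_congr rfl fun k _ => ?_
        rw [← mul_assoc, omg_mul]
        congr 2
        push_cast
        ring
      · rw [← Finset.mul_sum]
        congr 1
        have h1 := Finset.sum_range_succ'
          (fun k : ℕ => omg d (-((i.1:ℝ)*(k:ℕ))) * Φ k a j.1) d
        have h2 := Finset.sum_range_succ
          (fun k : ℕ => omg d (-((i.1:ℝ)*(k:ℕ))) * Φ k a j.1) d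
        have h3 : omg d (-((i.1:ℝ)*((0:ℕ):ℝ))) * Φ 0 a j.1 = 0 := by rw [hg0]; ring
        have h4 : omg d (-((i.1:ℝ)*((d:ℕ):ℝ))) * Φ d a j.1 = Φ d a j.1 := by
          rw [hgd, one_mul]
        linear_combination h2 - h1 + h4 - h3
    rw [← e1, e2]
    ring

  have hγ0 : ∀ l : Fin d, l ≠ i → l ≠ j → γ l = 0 := by
    intro l hl1 hl2
    have h := hstar l.1 l.isLt
    rw [hgeo] at h
    have hΦ0' : Φ d l.1 j.1 = 0 :=
      hPhiD0 l.1 j.1 l.isLt j.isLt (fun hh => hl2 (Fin.ext hh))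
    rw [hΦ0'] at h
    have hne3 : omg d (l.1:ℝ) - omg d (i.1:ℝ) ≠ 0 :=
      sub_ne_zero.mpr (homgne l.1 i.1 l.isLt i.isLt (fun hh => hl1 (Fin.ext hh)))
    have hkey : (omg d (l.1:ℝ) - omg d (i.1:ℝ)) * γ l = 0 := by
      simp only [hγdef]
      linear_combination h
    rcases mul_eq_zero.mp hkey with h' | h'
    · exact absurd h' hne3
    · exact h'
  have hγj : γ j = omg d (-(j.1 : ℝ)) * ∑ k ∈ Finset.range d, (k : ℂ) * w ^ k := by
    simp only [hγdef]
    rw [Finset.mul_sum]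
    refine Finset.sum_congr rfl fun k _ => ?_
    rw [hPhiDiag k j.1]
    rw [show omg d (-((i.1:ℝ)*k)) * ((k:ℂ) * omg d ((j.1:ℝ)*((k:ℝ)-1)))
        = (k:ℂ) * (omg d (-((i.1:ℝ)*k)) * omg d ((j.1:ℝ)*((k:ℝ)-1))) from by ring, omg_mul]
    rw [hwdef, omg_pow]
    rw [show omg d (-(j.1:ℝ)) * ((k:ℂ) * omg d ((k:ℝ)*((j.1:ℝ)-i.1)))
        = (k:ℂ) * (omg d (-(j.1:ℝ)) * omg d ((k:ℝ)*((j.1:ℝ)-i.1))) from by ring, omg_mul]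
    congr 2
    ring
  have hγi : (1 - w) * γ i = d * w * omg d (-(j.1 : ℝ)) := by
    have hterm : ∀ k : ℕ, omg d (-((i.1:ℝ)*k)) * Φ k i.1 j.1
        = omg d (-(j.1:ℝ)) * (w * ∑ u ∈ Finset.range k, w ^ u) := by
      intro k
      simp only [hΦdef]
      rw [Finset.mul_sum]
      trans (∑ r ∈ Finset.range k, omg d (-(j.1:ℝ)) * w ^ (k - r))
      · refine Finset.sum_congr rfl fun r hr => ?_
        rw [omg_mul, hwdef, omg_pow, omg_mul]
        congr 1
        rw [Nat.cast_sub (le_of_lt (Finset.mem_range.mp hr))]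
        push_cast
        ring
      · trans (∑ r ∈ Finset.range k, omg d (-(j.1:ℝ)) * w ^ ((k - 1 - r) + 1))
        · refine Finset.sum_congr rfl fun r hr => ?_
          congr 2
          have := Finset.mem_range.mp hr
          omega
        · rw [Finset.sum_range_reflect (fun u => omg d (-(j.1:ℝ)) * w ^ (u+1)) k]
          rw [Finset.mul_sum, Finset.mul_sum]
          refine Finset.sum_congr rfl fun u _ => ?_
          ring
    have hgs : ∀ k : ℕ, (1 - w) * ∑ u ∈ Finset.range k, w ^ u = 1 - w ^ k := by
      intro k
      linear_combination -(geom_sum_mul w k)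
    have hγieq : γ i = ∑ k ∈ Finset.range d, omg d (-(j.1:ℝ)) * (w * ∑ u ∈ Finset.range k, w ^ u) := by
      simp only [hγdef]
      exact Finset.sum_congr rfl fun k _ => hterm k
    rw [hγieq, Finset.mul_sum]
    trans (∑ k ∈ Finset.range d, omg d (-(j.1:ℝ)) * w * (1 - w ^ k))
    · refine Finset.sum_congr rfl fun k _ => ?_
      linear_combination (omg d (-(j.1:ℝ)) * w) * hgs k
    · have expand : ∑ k ∈ Finset.range d, omg d (-(j.1:ℝ)) * w * (1 - w^k)
          = (d:ℂ) * (omg d (-(j.1:ℝ)) * w)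
            - (omg d (-(j.1:ℝ)) * w) * ∑ k ∈ Finset.range d, w^k := by
        simp only [mul_sub, mul_one]
        rw [Finset.sum_sub_distrib, Finset.sum_const, Finset.card_range, nsmul_eq_mul,
          ← Finset.mul_sum]
      rw [expand, hgeo]
      ring
  have hγ00 : (∑ k ∈ Finset.range d, omg d (-((i.1:ℝ)*k)) * Φ k 0 j.1) = 0 := by
    have h00 := hγ0 i0 (Ne.symm hi) (Ne.symm hj)
    simpa [hγdef, hi0def] using h00
  have hP0 : ∑ k ∈ Finset.range d, omg d (-((i.1 : ℝ) * k)) * Φ (k+1) 0 j.1 = 0 := by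
    have e1 : (∑ k ∈ Finset.range d, omg d (-((i.1:ℝ)*k)) * Φ (k+1) 0 j.1)
        = omg d ((0:ℕ):ℝ) * (∑ k ∈ Finset.range d, omg d (-((i.1:ℝ)*k)) * Φ k 0 j.1)
          + ∑ k ∈ Finset.range d, w ^ k := by
      rw [Finset.mul_sum, ← Finset.sum_add_distrib]
      refine Finset.sum_congr rfl fun k _ => ?_
      rw [hPhiRec k 0 j.1, mul_add]
      congr 1
      · ring
      · rw [omg_mul, hwdef, omg_pow]
        congr 1
        ring
    rw [e1, hγ00, hgeo]
    ring
  -- assemble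
  have hwk : ∀ k : ℕ, omg d (-((i.1:ℝ)*k)) * omg d ((j.1:ℝ)*k) = w ^ k := by
    intro k
    rw [omg_mul, hwdef, omg_pow]
    congr 1
    ring
  have hswap : ∑ k ∈ Finset.range d,
        omg d (-((i.1:ℝ)*k)) * ∑ l : Fin d, cf l * Φ k l.1 j.1 * z l
      = ∑ l : Fin d, cf l * z l * γ l := by
    trans (∑ k ∈ Finset.range d, ∑ l : Fin d,
        omg d (-((i.1:ℝ)*k)) * (cf l * Φ k l.1 j.1 * z l))
    · exact Finset.sum_congr rfl fun k _ => Finset.mul_sum _ _ _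
    · rw [Finset.sum_comm]
      refine Finset.sum_congr rfl fun l _ => ?_
      simp only [hγdef]
      rw [Finset.mul_sum]
      refine Finset.sum_congr rfl fun k _ => ?_
      ring
  have hpair : ∑ l : Fin d, cf l * z l * γ l = cf i * z i * γ i + cf j * z j * γ j := by
    rw [← Finset.sum_subset (Finset.subset_univ ({i, j} : Finset (Fin d)))
      (fun l _ hl => ?_)]
    · rw [Finset.sum_pair hij]
    · simp only [Finset.mem_insert, Finset.mem_singleton, not_or] at hl
      rw [hγ0 l hl.1 hl.2, mul_zero]
  have hkm1 : ∑ k ∈ Finset.range d, ((k:ℂ) - 1) * w ^ k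
      = ∑ k ∈ Finset.range d, (k:ℂ) * w ^ k := by
    have : ∑ k ∈ Finset.range d, ((k:ℂ) - 1) * w ^ k
        = (∑ k ∈ Finset.range d, (k:ℂ) * w ^ k) - ∑ k ∈ Finset.range d, w ^ k := by
      rw [← Finset.sum_sub_distrib]
      exact Finset.sum_congr rfl fun k _ => by ring
    rw [this, hgeo, sub_zero]
  have hzj : z j = omg d (j.1:ℝ) * xx * δ := by
    simp only [hzdef]
    rw [hdiagB j p q, hδdef]
  have f6 : omg d (j.1:ℝ) * omg d (-(j.1:ℝ)) = 1 := by
    rw [omg_mul, show (j.1:ℝ) + -(j.1:ℝ) = 0 from by ring, omg_zero]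
  have hmain : cf i * γ i * z i = cf j * δ * (omg d (1/m) - xx) *
      ∑ k ∈ Finset.range d, (k : ℂ) * w ^ k := by
    have hmain0 : ∑ k ∈ Finset.range d, omg d (-((i.1:ℝ)*k)) *
        (omg d (1/m) * Φ (k+1) 0 j.1 * cf j * δ
          + ((k:ℂ) - 1) * omg d (1/m) * omg d ((j.1 : ℝ) * k) * cf j * δ
          - ∑ l : Fin d, cf l * Φ k l.1 j.1 * z l) = 0 := by
      refine Finset.sum_eq_zero fun k hk => ?_
      rw [hPk k (Finset.mem_range.mp hk), mul_zero]
    have hexp : ∑ k ∈ Finset.range d, omg d (-((i.1:ℝ)*k)) *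
        (omg d (1/m) * Φ (k+1) 0 j.1 * cf j * δ
          + ((k:ℂ) - 1) * omg d (1/m) * omg d ((j.1 : ℝ) * k) * cf j * δ
          - ∑ l : Fin d, cf l * Φ k l.1 j.1 * z l)
        = omg d (1/m) * cf j * δ *
            (∑ k ∈ Finset.range d, omg d (-((i.1:ℝ)*k)) * Φ (k+1) 0 j.1)
          + omg d (1/m) * cf j * δ * (∑ k ∈ Finset.range d, ((k:ℂ) - 1) * w ^ k)
          - ∑ k ∈ Finset.range d,
              omg d (-((i.1:ℝ)*k)) * ∑ l : Fin d, cf l * Φ k l.1 j.1 * z l := by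
      rw [Finset.mul_sum, Finset.mul_sum, ← Finset.sum_add_distrib, ← Finset.sum_sub_distrib]
      refine Finset.sum_congr rfl fun k _ => ?_
      linear_combination (((k:ℂ) - 1) * omg d (1/m) * cf j * δ) * hwk k
    rw [hexp, hP0, hswap, hpair, hkm1, hzj, hγj] at hmain0
    linear_combination -hmain0 - (cf j * xx * δ * ∑ k ∈ Finset.range d, (k:ℂ) * w ^ k) * f6
  have hzi : cf i * ((d : ℂ) * w * omg d (-(j.1 : ℝ))) * z i
      = -(cf j * δ) * (omg d (1/m) - omg d ((1-(d:ℝ))/m)) := by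
    linear_combination (1-w) * hmain - (cf i * z i) * hγi
      + (cf j * δ * (omg d (1/m) - xx)) * hT + (cf j * δ) * hxd
  have hdc : (d:ℂ) ≠ 0 := Nat.cast_ne_zero.mpr hdn
  have hs0 : s ≠ 0 := by
    rw [hsdef]
    rw [Complex.ofReal_ne_zero]
    have h1 : 0 < Real.pi / m := by positivity
    have h2 : Real.pi / m < Real.pi := by
      apply div_lt_self Real.pi_pos
      have : (2:ℝ) ≤ m := by exact_mod_cast hm
      linarith
    exact ne_of_gt (Real.sin_pos_of_pos_of_lt_pi h1 h2)
  have hne : cf i * ((d : ℂ) * w * omg d (-(j.1 : ℝ))) ≠ 0 := by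
    apply mul_ne_zero
    · rw [hcfdef]
      simp only [if_neg hi]
      exact mul_ne_zero (mul_ne_zero
        (div_ne_zero (mul_ne_zero two_ne_zero Complex.I_ne_zero) hdc) hs0)
        (omg_ne_zero _ _)
    · rw [hwdef]
      exact mul_ne_zero (mul_ne_zero hdc (omg_ne_zero _ _)) (omg_ne_zero _ _)
  have hfin : cf i * ((d : ℂ) * w * omg d (-(j.1 : ℝ))) *
      ((-(2 * Complex.I * s / d) * omg d (((i : ℝ) + j) / 2 + (2 - (d : ℝ)) / (2 * m))) * δ)
      = -(cf j * δ) * (omg d (1/m) - omg d ((1-(d:ℝ))/m)) := by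
    have hG : 2 * Complex.I * s = omg d ((d:ℝ)/(2*m)) - omg d (-((d:ℝ)/(2*m))) := by
      rw [hsdef]
      linear_combination hsin d m hd hm
    have hk1 := key1 d m hd hm i.1 j.1
    rw [hcfdef]
    simp only [if_neg hi, if_neg hj]
    rw [hwdef]
    have hdu : (d:ℂ) * (d:ℂ)⁻¹ = 1 := mul_inv_cancel₀ hdc
    linear_combination
      (-(4 * Complex.I^2 * s^2 * (d:ℂ)⁻¹ * (omg d ((i.1:ℝ)/2+(2-(d:ℝ))/(2*m))
          * omg d (((i.1:ℝ)+j.1)/2+(2-(d:ℝ))/(2*m))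
          * omg d ((j.1:ℝ)-i.1) * omg d (-(j.1:ℝ))) * δ)) * hdu
      - (2*Complex.I*s*(d:ℂ)⁻¹*δ*(omg d ((i.1:ℝ)/2+(2-(d:ℝ))/(2*m))
          * omg d (((i.1:ℝ)+j.1)/2+(2-(d:ℝ))/(2*m))
          * omg d ((j.1:ℝ)-i.1) * omg d (-(j.1:ℝ)))) * hG
      - (2*Complex.I*s*(d:ℂ)⁻¹*δ) * hk1
  have := mul_left_cancel₀ hne (hzi.trans hfin.symm)
  show z i = _
  rw [this]
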